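/- arXiv:0709.4072 — 3 statements merged into one kernel-verified Lean document; each statement's English description precedes it below -/
import Mathlib

section
/- Let F_0,…,F_q be homogeneous polynomials on ℂ^{r+1}. The q-form ω = i_R(dF_0 ∧ ⋯ ∧ dF_q) satisfies the Plücker decomposability condition: (i_v ω) ∧ ω = 0 for every v ∈ Λ^{q−1} ℂ^{r+1}. -/
/-!
Write `Ω = dF₀ ∧ ⋯ ∧ dF_q`, so that `ω = i_R Ω`. Expanding the Jacobian minors along a column, the
contraction of a product `dF_{S₀} ∧ ⋯ ∧ dF_{Sₘ}` by any vector field is a polynomial combination of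
the products of `m` of its factors; hence `α = i_v ω` is a combination `∑ cₖ dFₖ`. In the expansion
`ω = ∑ₖ ± R(Fₖ) dF₀ ∧ ⋯ ∧ dF̂ₖ ∧ ⋯ ∧ dF_q` only the term omitting `dFₖ` survives in `dFₖ ∧ ω`, so
`dFₖ ∧ ω = R(Fₖ) Ω` and therefore `α ∧ ω = (i_R α) Ω`. Finally, contractions anticommute, so
`i_R α = ± i_v i_R i_R Ω = 0`.
-/

open MvPolynomial

/-- Polynomial differential forms on `ℂ^n`: the value at a finite set `I` of
indices is the polynomial coefficient of `dx_I` (indices in increasing order). -/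
abbrev PolyForm (n : ℕ) := Finset (Fin n) → MvPolynomial (Fin n) ℂ

/-- `η` is a `q`-form if its coefficients vanish off index sets of cardinality `q`. -/
def PolyForm.IsForm {n : ℕ} (q : ℕ) (η : PolyForm n) : Prop :=
  ∀ I : Finset (Fin n), I.card ≠ q → η I = 0

/-- Exterior derivative of a polynomial differential form. -/
noncomputable def polyExtDeriv {n : ℕ} (η : PolyForm n) : PolyForm n :=
  fun J => ∑ j ∈ J,
    (-1 : MvPolynomial (Fin n) ℂ) ^ ((J.filter (· < j)).card) * pderiv j (η (J.erase j))

/-- Contraction (interior product) with the Euler vector field `R = Σ xᵢ ∂/∂xᵢ`. -/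
noncomputable def contractR {n : ℕ} (η : PolyForm n) : PolyForm n :=
  fun I => ∑ j ∈ Iᶜ,
    (-1 : MvPolynomial (Fin n) ℂ) ^ ((I.filter (· < j)).card) * X j * η (insert j I)

/-- Contraction with a constant vector field `v`. -/
noncomputable def contractVec {n : ℕ} (v : Fin n → ℂ) (η : PolyForm n) : PolyForm n :=
  fun I => ∑ j ∈ Iᶜ,
    (-1 : MvPolynomial (Fin n) ℂ) ^ ((I.filter (· < j)).card) * C (v j) * η (insert j I)

/-- Wedge product `α ∧ β` where `α` is a `p`-form. -/
noncomputable def wedgeForm {n : ℕ} (p : ℕ) (α β : PolyForm n) : PolyForm n :=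
  fun K => ∑ I ∈ K.powerset.filter (fun I => I.card = p),
    (-1 : MvPolynomial (Fin n) ℂ) ^ (∑ a ∈ I, ((K \ I).filter (· < a)).card)
      * α I * β (K \ I)

/-- The `(m)`-form `dF₀ ∧ ⋯ ∧ dF_{m-1}`, given by determinants of Jacobian minors. -/
noncomputable def dwedge {n m : ℕ} (F : Fin m → MvPolynomial (Fin n) ℂ) : PolyForm n :=
  fun K => if h : K.card = m then
      Matrix.det (Matrix.of fun i j : Fin m =>
        pderiv ((K.orderIsoOfFin h j : Fin n)) (F i))
    else 0

open Finset

namespace Finset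

variable {α : Type*} [LinearOrder α]

lemma card_filter_lt_orderEmbOfFin {s : Finset α} {k : ℕ} (h : s.card = k) (c : Fin k) :
    #(s.filter (· < s.orderEmbOfFin h c)) = c := by
  have : s.filter (· < s.orderEmbOfFin h c) = (Iio c).map (s.orderEmbOfFin h).toEmbedding := by
    ext x
    simp only [mem_filter, mem_map, mem_Iio, RelEmbedding.coe_toEmbedding]
    constructor
    · rintro ⟨hxs, hlt⟩
      obtain ⟨t, rfl⟩ : x ∈ Set.range (s.orderEmbOfFin h) := by rwa [range_orderEmbOfFin]
      exact ⟨t, (s.orderEmbOfFin h).lt_iff_lt.mp hlt, rfl⟩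
    · rintro ⟨t, hlt, rfl⟩
      exact ⟨orderEmbOfFin_mem s h t, (s.orderEmbOfFin h).lt_iff_lt.mpr hlt⟩
  rw [this, card_map, Fin.card_Iio]

lemma exists_orderEmbOfFin_eq {s : Finset α} {k : ℕ} (h : s.card = k) {a : α} (ha : a ∈ s) :
    ∃ c, s.orderEmbOfFin h c = a := by
  rwa [← Set.mem_range, range_orderEmbOfFin]

lemma orderEmbOfFin_eq_of_erase {s t : Finset α} {m : ℕ} (hs : s.card = m + 1) (c : Fin (m + 1))
    (hst : s.erase (s.orderEmbOfFin hs c) = t) (ht : t.card = m) (b : Fin m) :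
    t.orderEmbOfFin ht b = s.orderEmbOfFin hs (c.succAbove b) := by
  subst hst
  refine (congrFun (orderEmbOfFin_unique ht (f := fun b => s.orderEmbOfFin hs (c.succAbove b))
    (fun b => mem_erase.mpr ⟨(s.orderEmbOfFin hs).injective.ne (Fin.succAbove_ne c b),
      orderEmbOfFin_mem _ _ _⟩)
    ((s.orderEmbOfFin hs).strictMono.comp (Fin.strictMono_succAbove c))) b).symm

lemma card_filter_lt_insert {I : Finset α} {j : α} (hj : j ∉ I) (k : α) :
    #((insert j I).filter (· < k)) = #(I.filter (· < k)) + if j < k then 1 else 0 := by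
  rw [filter_insert]
  split_ifs with h
  · exact card_insert_of_notMem fun hmem => hj (mem_of_mem_filter _ hmem)
  · rfl

lemma neg_one_pow_card_filter_lt_insert_swap {R : Type*} [CommRing R] {I : Finset α} {j k : α}
    (hj : j ∉ I) (hk : k ∉ I) (hjk : j ≠ k) :
    (-1 : R) ^ #(I.filter (· < j)) * (-1) ^ #((insert j I).filter (· < k)) =
      -((-1) ^ #(I.filter (· < k)) * (-1) ^ #((insert k I).filter (· < j))) := by
  rw [card_filter_lt_insert hj, card_filter_lt_insert hk]
  rcases hjk.lt_or_gt with hlt | hlt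
  · rw [if_pos hlt, if_neg (asymm hlt)]
    ring
  · rw [if_neg (asymm hlt), if_pos hlt]
    ring

end Finset

noncomputable section

variable {n : ℕ}

def contract (w : Fin n → MvPolynomial (Fin n) ℂ) :
    PolyForm n →ₗ[MvPolynomial (Fin n) ℂ] PolyForm n where
  toFun η I :=
    ∑ j ∈ Iᶜ, (-1 : MvPolynomial (Fin n) ℂ) ^ #(I.filter (· < j)) * w j * η (insert j I)
  map_add' η η' := by
    funext I
    simp only [Pi.add_apply, mul_add, sum_add_distrib]
  map_smul' p η := by
    funext I
    simp only [Pi.smul_apply, smul_eq_mul, RingHom.id_apply, mul_sum]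
    exact sum_congr rfl fun j _ => by ring

lemma contract_apply (w : Fin n → MvPolynomial (Fin n) ℂ) (η : PolyForm n)
    (I : Finset (Fin n)) :
    contract w η I =
      ∑ j ∈ Iᶜ, (-1 : MvPolynomial (Fin n) ℂ) ^ #(I.filter (· < j)) * w j * η (insert j I) :=
  rfl

lemma contractR_eq_contract (η : PolyForm n) : contractR η = contract X η := rfl

lemma contractVec_eq_contract (v : Fin n → ℂ) (η : PolyForm n) :
    contractVec v η = contract (fun j => C (v j)) η := rfl

def jacobian {m k : ℕ} (G : Fin m → MvPolynomial (Fin n) ℂ) (cols : Fin k → Fin n) :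
    Matrix (Fin m) (Fin k) (MvPolynomial (Fin n) ℂ) :=
  Matrix.of fun i b => pderiv (cols b) (G i)

lemma dwedge_of_card_eq {m : ℕ} (G : Fin m → MvPolynomial (Fin n) ℂ) {K : Finset (Fin n)}
    (h : K.card = m) : dwedge G K = (jacobian G (K.orderEmbOfFin h)).det := by
  simp only [dwedge, dif_pos h, coe_orderIsoOfFin_apply, jacobian]

lemma dwedge_of_card_ne {m : ℕ} (G : Fin m → MvPolynomial (Fin n) ℂ) {K : Finset (Fin n)}
    (h : K.card ≠ m) : dwedge G K = 0 :=
  dif_neg h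

lemma dwedge_eq_zero_of_eq {m : ℕ} {G : Fin m → MvPolynomial (Fin n) ℂ} {i₁ i₂ : Fin m}
    (hne : i₁ ≠ i₂) (heq : G i₁ = G i₂) : dwedge G = 0 := by
  funext K
  by_cases hK : K.card = m
  · rw [dwedge_of_card_eq _ hK]
    exact Matrix.det_zero_of_row_eq hne (funext fun b => by simp [jacobian, heq])
  · exact dwedge_of_card_ne _ hK

lemma dwedge_cons_removeNth {m : ℕ} (G : Fin (m + 1) → MvPolynomial (Fin n) ℂ)
    (i : Fin (m + 1)) :
    dwedge (Fin.cons (G i) (i.removeNth G)) =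
      (-1 : MvPolynomial (Fin n) ℂ) ^ (i : ℕ) • dwedge G := by
  funext K
  rw [Fin.cons_removeNth_eq_comp_cycleRange_symm, Pi.smul_apply, smul_eq_mul]
  by_cases hK : K.card = m + 1
  · rw [dwedge_of_card_eq _ hK, dwedge_of_card_eq _ hK,
      show jacobian (G ∘ i.cycleRange.symm) (K.orderEmbOfFin hK)
        = (jacobian G (K.orderEmbOfFin hK)).submatrix i.cycleRange.symm id from rfl,
      Matrix.det_permute, Equiv.Perm.sign_symm, Fin.sign_cycleRange]
    norm_num
  · rw [dwedge_of_card_ne _ hK, dwedge_of_card_ne _ hK, mul_zero]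

lemma det_jacobian_cons {m : ℕ} (G : Fin (m + 1) → MvPolynomial (Fin n) ℂ) (j : Fin n)
    {I : Finset (Fin n)} (hI : I.card = m) :
    (jacobian G (Fin.cons j (I.orderEmbOfFin hI))).det =
      ∑ i : Fin (m + 1), (-1) ^ (i : ℕ) * pderiv j (G i) * dwedge (i.removeNth G) I := by
  rw [Matrix.det_succ_column_zero]
  refine sum_congr rfl fun i _ => ?_
  rw [dwedge_of_card_eq _ hI]
  rfl

lemma sum_pderiv_mul_dwedge_removeNth_of_mem {m : ℕ}
    (G : Fin (m + 1) → MvPolynomial (Fin n) ℂ) {I : Finset (Fin n)} {j : Fin n} (hj : j ∈ I) :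
    ∑ i : Fin (m + 1), (-1) ^ (i : ℕ) * pderiv j (G i) * dwedge (i.removeNth G) I = 0 := by
  by_cases hI : I.card = m
  · obtain ⟨c, rfl⟩ := exists_orderEmbOfFin_eq hI hj
    rw [← det_jacobian_cons G _ hI]
    exact Matrix.det_zero_of_column_eq (Fin.succ_ne_zero c).symm fun i => rfl
  · exact sum_eq_zero fun i _ => by rw [dwedge_of_card_ne _ hI, mul_zero]

lemma sum_pderiv_mul_dwedge_removeNth_of_notMem {m : ℕ}
    (G : Fin (m + 1) → MvPolynomial (Fin n) ℂ) {I : Finset (Fin n)} {j : Fin n} (hj : j ∉ I) :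
    ∑ i : Fin (m + 1), (-1) ^ (i : ℕ) * pderiv j (G i) * dwedge (i.removeNth G) I =
      (-1) ^ #(I.filter (· < j)) * dwedge G (insert j I) := by
  by_cases hI : I.card = m
  · have hK : (insert j I).card = m + 1 := by rw [card_insert_of_notMem hj, hI]
    obtain ⟨c, hc⟩ := exists_orderEmbOfFin_eq hK (mem_insert_self j I)
    have hsign : #(I.filter (· < j)) = c := by
      rw [← card_filter_lt_orderEmbOfFin hK c, hc, filter_insert, if_neg (lt_irrefl j)]
    have hcols : (Fin.cons j (I.orderEmbOfFin hI) : Fin (m + 1) → Fin n) =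
        (insert j I).orderEmbOfFin hK ∘ c.cycleRange.symm := by
      rw [← Fin.cons_removeNth_eq_comp_cycleRange_symm, hc]
      congr 1
      funext b
      exact orderEmbOfFin_eq_of_erase hK c (by rw [hc, erase_insert hj]) hI b
    rw [← det_jacobian_cons G _ hI, hcols, dwedge_of_card_eq _ hK, hsign,
      show jacobian G ((insert j I).orderEmbOfFin hK ∘ c.cycleRange.symm)
        = (jacobian G ((insert j I).orderEmbOfFin hK)).submatrix id c.cycleRange.symm from rfl,
      Matrix.det_permute', Equiv.Perm.sign_symm, Fin.sign_cycleRange]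
    norm_num
  · rw [dwedge_of_card_ne G (by rw [card_insert_of_notMem hj]; omega), mul_zero]
    exact sum_eq_zero fun i _ => by rw [dwedge_of_card_ne _ hI, mul_zero]

lemma contract_dwedge {m : ℕ} (w : Fin n → MvPolynomial (Fin n) ℂ)
    (G : Fin (m + 1) → MvPolynomial (Fin n) ℂ) :
    contract w (dwedge G) =
      ∑ i : Fin (m + 1),
        ((-1) ^ (i : ℕ) * ∑ j, w j * pderiv j (G i)) • dwedge (i.removeNth G) := by
  funext I
  calc contract w (dwedge G) I
      = ∑ j ∈ Iᶜ, w j * ∑ i : Fin (m + 1),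
          (-1) ^ (i : ℕ) * pderiv j (G i) * dwedge (i.removeNth G) I := by
        rw [contract_apply]
        refine sum_congr rfl fun j hj => ?_
        rw [sum_pderiv_mul_dwedge_removeNth_of_notMem G (mem_compl.mp hj)]
        ring
    _ = ∑ j, w j * ∑ i : Fin (m + 1),
          (-1) ^ (i : ℕ) * pderiv j (G i) * dwedge (i.removeNth G) I := by
        rw [← sum_compl_add_sum I, left_eq_add]
        exact sum_eq_zero fun j hj => by
          rw [sum_pderiv_mul_dwedge_removeNth_of_mem G hj, mul_zero]
    _ = _ := by
        simp only [Finset.sum_apply, Pi.smul_apply, smul_eq_mul, mul_sum, sum_mul]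
        rw [sum_comm]
        exact sum_congr rfl fun i _ => sum_congr rfl fun j _ => by ring

def wedgeFormBilin (p : ℕ) :
    PolyForm n →ₗ[MvPolynomial (Fin n) ℂ] PolyForm n →ₗ[MvPolynomial (Fin n) ℂ] PolyForm n :=
  LinearMap.mk₂ _ (wedgeForm p)
    (fun α α' β => funext fun K => by
      simp only [wedgeForm, Pi.add_apply, mul_add, add_mul, sum_add_distrib])
    (fun c α β => funext fun K => by
      simp only [wedgeForm, Pi.smul_apply, smul_eq_mul, mul_sum]
      exact sum_congr rfl fun I _ => by ring)
    (fun α β β' => funext fun K => by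
      simp only [wedgeForm, Pi.add_apply, mul_add, sum_add_distrib])
    (fun c α β => funext fun K => by
      simp only [wedgeForm, Pi.smul_apply, smul_eq_mul, mul_sum]
      exact sum_congr rfl fun I _ => by ring)

lemma wedgeFormBilin_apply (p : ℕ) (α β : PolyForm n) :
    wedgeFormBilin p α β = wedgeForm p α β :=
  rfl

lemma wedgeForm_one_apply (α β : PolyForm n) (K : Finset (Fin n)) :
    wedgeForm 1 α β K = ∑ a ∈ K,
      (-1 : MvPolynomial (Fin n) ℂ) ^ #((K.erase a).filter (· < a)) * α {a} * β (K.erase a) := by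
  have hsingletons :
      K.powerset.filter (fun I => I.card = 1) = K.map ⟨singleton, singleton_injective⟩ := by
    ext I
    simp only [mem_filter, mem_powerset, mem_map, Function.Embedding.coeFn_mk, card_eq_one]
    constructor
    · rintro ⟨hsub, a, rfl⟩
      exact ⟨a, singleton_subset_iff.mp hsub, rfl⟩
    · rintro ⟨a, ha, rfl⟩
      exact ⟨singleton_subset_iff.mpr ha, a, rfl⟩
  rw [wedgeForm, hsingletons, sum_map]
  exact sum_congr rfl fun a _ => by
    simp only [Function.Embedding.coeFn_mk, sum_singleton, sdiff_singleton_eq_erase]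

lemma dwedge_const_singleton (g : MvPolynomial (Fin n) ℂ) (a : Fin n) :
    dwedge (fun _ : Fin 1 => g) {a} = pderiv a g := by
  rw [dwedge_of_card_eq _ (card_singleton a), Matrix.det_fin_one]
  simp [jacobian, orderEmbOfFin_singleton]

lemma dwedge_cons {m : ℕ} (g : MvPolynomial (Fin n) ℂ) (G : Fin m → MvPolynomial (Fin n) ℂ) :
    dwedge (Fin.cons g G) = wedgeForm 1 (dwedge fun _ : Fin 1 => g) (dwedge G) := by
  funext K
  rw [wedgeForm_one_apply]
  by_cases hK : K.card = m + 1
  · rw [dwedge_of_card_eq _ hK, Matrix.det_succ_row_zero, ← sum_coe_sort K,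
      ← (K.orderIsoOfFin hK).toEquiv.sum_comp]
    refine sum_congr rfl fun (t : Fin (m + 1)) _ => ?_
    simp only [OrderIso.coe_toEquiv, coe_orderIsoOfFin_apply]
    have ha : (K.erase (K.orderEmbOfFin hK t)).card = m := by
      rw [card_erase_of_mem (orderEmbOfFin_mem K hK t), hK, Nat.add_sub_cancel]
    have hsign : #((K.erase (K.orderEmbOfFin hK t)).filter (· < K.orderEmbOfFin hK t)) = t := by
      rw [filter_erase, erase_eq_of_notMem (by simp), card_filter_lt_orderEmbOfFin hK t]
    have hminor : (jacobian (Fin.cons g G) (K.orderEmbOfFin hK)).submatrix Fin.succ t.succAbove =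
        jacobian G ((K.erase (K.orderEmbOfFin hK t)).orderEmbOfFin ha) := by
      ext i b
      simp only [jacobian, Matrix.submatrix_apply, Matrix.of_apply, Fin.cons_succ,
        orderEmbOfFin_eq_of_erase hK t rfl ha b]
    rw [dwedge_const_singleton, dwedge_of_card_eq G ha, ← hminor]
    congr 2
    exact congrArg _ hsign.symm
  · rw [dwedge_of_card_ne _ hK]
    refine (sum_eq_zero fun a ha => ?_).symm
    have := card_pos.mpr ⟨a, ha⟩
    rw [dwedge_of_card_ne G (by rw [card_erase_of_mem ha]; omega), mul_zero]

lemma wedgeForm_dwedge_contract_dwedge {m : ℕ} (w : Fin n → MvPolynomial (Fin n) ℂ)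
    (F : Fin (m + 1) → MvPolynomial (Fin n) ℂ) (i : Fin (m + 1)) :
    wedgeForm 1 (dwedge fun _ : Fin 1 => F i) (contract w (dwedge F)) =
      (∑ j, w j * pderiv j (F i)) • dwedge F := by
  rw [contract_dwedge, ← wedgeFormBilin_apply, map_sum, sum_eq_single i]
  · rw [map_smul, wedgeFormBilin_apply, ← dwedge_cons, dwedge_cons_removeNth, smul_smul,
      mul_right_comm, ← pow_add, Even.neg_one_pow ⟨_, rfl⟩, one_mul]
  · intro k _ hki
    obtain ⟨b, hb⟩ := Fin.exists_succAbove_eq (Ne.symm hki)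
    rw [map_smul, wedgeFormBilin_apply, ← dwedge_cons,
      dwedge_eq_zero_of_eq (Fin.succ_ne_zero b).symm (by simp [Fin.removeNth_apply, hb]),
      smul_zero]
  · exact fun h => (h (mem_univ i)).elim

lemma contract_dwedge_const_empty (w : Fin n → MvPolynomial (Fin n) ℂ)
    (g : MvPolynomial (Fin n) ℂ) :
    contract w (dwedge fun _ : Fin 1 => g) ∅ = ∑ j, w j * pderiv j g := by
  rw [contract_dwedge, Fin.sum_univ_one, Pi.smul_apply, smul_eq_mul,
    dwedge_of_card_eq _ card_empty, Matrix.det_fin_zero]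
  simp

def minorForms {N : ℕ} (F : Fin N → MvPolynomial (Fin n) ℂ) (m : ℕ) : Set (PolyForm n) :=
  Set.range fun S : Fin m → Fin N => dwedge (F ∘ S)

lemma contract_mem_span_minorForms {N m : ℕ} (F : Fin N → MvPolynomial (Fin n) ℂ)
    (w : Fin n → MvPolynomial (Fin n) ℂ) {γ : PolyForm n}
    (hγ : γ ∈ Submodule.span (MvPolynomial (Fin n) ℂ) (minorForms F (m + 1))) :
    contract w γ ∈ Submodule.span (MvPolynomial (Fin n) ℂ) (minorForms F m) := by
  refine (Submodule.span_le (p := (Submodule.span _ (minorForms F m)).comap (contract w)).mpr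
    ?_ hγ)
  rintro _ ⟨S, rfl⟩
  rw [SetLike.mem_coe, Submodule.mem_comap, contract_dwedge]
  exact Submodule.sum_mem _ fun i _ =>
    Submodule.smul_mem _ _ (Submodule.subset_span ⟨S ∘ i.succAbove, rfl⟩)

lemma foldr_contractVec_mem_span_minorForms {N : ℕ} (F : Fin N → MvPolynomial (Fin n) ℂ)
    (vs : List (Fin n → ℂ)) {m : ℕ} {γ : PolyForm n}
    (hγ : γ ∈ Submodule.span (MvPolynomial (Fin n) ℂ) (minorForms F (vs.length + m))) :
    vs.foldr contractVec γ ∈ Submodule.span (MvPolynomial (Fin n) ℂ) (minorForms F m) := by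
  induction vs generalizing m with
  | nil => simpa using hγ
  | cons v vs ih =>
    rw [List.length_cons, add_right_comm] at hγ
    exact contract_mem_span_minorForms F _ (ih hγ)

lemma wedgeForm_contract_dwedge_of_mem_span {m : ℕ} (w : Fin n → MvPolynomial (Fin n) ℂ)
    (F : Fin (m + 1) → MvPolynomial (Fin n) ℂ) {α : PolyForm n}
    (hα : α ∈ Submodule.span (MvPolynomial (Fin n) ℂ) (minorForms F 1)) :
    wedgeForm 1 α (contract w (dwedge F)) = contract w α ∅ • dwedge F := by
  simp only [← wedgeFormBilin_apply]
  induction hα using Submodule.span_induction with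
  | mem _ h =>
    obtain ⟨S, rfl⟩ := h
    dsimp only
    have hconst : F ∘ S = fun _ => F (S 0) := funext fun b => by rw [Subsingleton.elim b 0]; rfl
    rw [hconst, wedgeFormBilin_apply, wedgeForm_dwedge_contract_dwedge,
      contract_dwedge_const_empty]
  | zero => simp
  | add α β _ _ hα hβ =>
    rw [map_add, LinearMap.add_apply, hα, hβ, map_add, Pi.add_apply, add_smul]
  | smul c α _ hα =>
    rw [map_smul, LinearMap.smul_apply, hα, map_smul, Pi.smul_apply, smul_eq_mul, mul_smul]

lemma contract_anticomm (w w' : Fin n → MvPolynomial (Fin n) ℂ) (η : PolyForm n) :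
    contract w (contract w' η) = -contract w' (contract w η) := by
  funext I
  simp only [contract_apply, compl_insert, mul_sum, Pi.neg_apply, ← sum_neg_distrib]
  rw [sum_comm' (t' := Iᶜ) (s' := fun k => Iᶜ.erase k) (fun j k => by
    simp only [mem_erase]; tauto)]
  refine sum_congr rfl fun k hk => sum_congr rfl fun j hj => ?_
  obtain ⟨hjk, hj⟩ := mem_erase.mp hj
  have hsign := neg_one_pow_card_filter_lt_insert_swap (R := MvPolynomial (Fin n) ℂ)
    (mem_compl.mp hj) (mem_compl.mp hk) hjk
  rw [insert_comm]
  linear_combination (w j * w' k * η (insert j (insert k I))) * hsign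

lemma contract_contract_self (w : Fin n → MvPolynomial (Fin n) ℂ) (η : PolyForm n) :
    contract w (contract w η) = 0 :=
  funext fun I => CharZero.eq_neg_self_iff.mp (congrFun (contract_anticomm w w η) I)

lemma contractR_foldr_contractVec (vs : List (Fin n → ℂ)) {γ : PolyForm n}
    (h : contractR γ = 0) : contractR (vs.foldr contractVec γ) = 0 := by
  induction vs with
  | nil => exact h
  | cons v vs ih =>
    rw [List.foldr_cons, contractR_eq_contract, contractVec_eq_contract, contract_anticomm,
      ← contractR_eq_contract, ih, map_zero, neg_zero]

end

theorem plucker_condition_general (r q : ℕ)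
    (F : Fin (q + 1) → MvPolynomial (Fin (r + 1)) ℂ) :
    ∀ vs : List (Fin (r + 1) → ℂ), vs.length + 1 = q →
      wedgeForm 1 (vs.foldr contractVec (contractR (dwedge F))) (contractR (dwedge F)) = 0 := by
  rintro vs rfl
  have hα : vs.foldr contractVec (contractR (dwedge F)) ∈
      Submodule.span (MvPolynomial (Fin (r + 1)) ℂ) (minorForms F 1) :=
    foldr_contractVec_mem_span_minorForms F vs
      (contract_mem_span_minorForms F X (Submodule.subset_span ⟨id, rfl⟩))
  have hRα : contractR (vs.foldr contractVec (contractR (dwedge F))) = 0 :=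
    contractR_foldr_contractVec vs (contract_contract_self X _)
  simp only [contractR_eq_contract] at hα hRα ⊢
  rw [wedgeForm_contract_dwedge_of_mem_span X F hα, hRα]
  simp

/-- **Plücker decomposability.** For homogeneous polynomials `F₀, …, F_q` on `ℂ^{r+1}`,
the `q`-form `ω = i_R(dF₀ ∧ ⋯ ∧ dF_q)` satisfies `(i_v ω) ∧ ω = 0` for every
`v ∈ Λ^{q-1} ℂ^{r+1}` (contraction by a `(q-1)`-multivector, expressed by iterated
contraction along any list of `q-1` constant vectors). -/
theorem plucker_condition (r q : ℕ) (d : Fin (q + 1) → ℕ)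
    (F : Fin (q + 1) → MvPolynomial (Fin (r + 1)) ℂ)
    (hdeg : ∀ i, (F i).IsHomogeneous (d i)) :
    ∀ vs : List (Fin (r + 1) → ℂ), vs.length + 1 = q →
      wedgeForm 1 (vs.foldr contractVec (contractR (dwedge F))) (contractR (dwedge F)) = 0 :=
  plucker_condition_general r q F
end

section
/- For q = 1: the base locus of the rational map ρ(F_0,F_1) = i_R(dF_0 ∧ dF_1), i.e. the set of pairs of nonzero homogeneous polynomials (F_0, F_1) of degrees (d_0, d_1) with i_R(dF_0 ∧ dF_1) = 0, is exactly the set of pairs with F_0^{d_1} proportional to F_1^{d_0} (as points of the product of projective spaces: F_0^{d_1} = F_1^{d_0} up to scalar). -/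
open MvPolynomial

/-! The components of `i_R(dF₀ ∧ dF₁)` live on single indices `i`, and by Euler's identity the
`i`-th one is `d₀ F₀ ∂ᵢF₁ - d₁ F₁ ∂ᵢF₀`. Its vanishing says exactly that `G = F₀^{d₁}` and
`H = F₁^{d₀}` satisfy `H ∂ᵢG = G ∂ᵢH` for all `i`, i.e. `d(G/H) = 0`. Cancelling the common
factor of `G` and `H` in the factorial ring `ℂ[x]` leaves coprime `g, h` with `h ∂ᵢg = g ∂ᵢh`;
then `g ∣ ∂ᵢg`, which forces `∂ᵢg = 0` by degree, so `g` and likewise `h` are constants. -/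

namespace MvPolynomial

variable {σ R : Type*}

theorem totalDegree_pderiv_lt [CommSemiring R] {p : MvPolynomial σ R} {i : σ}
    (h : pderiv i p ≠ 0) : (pderiv i p).totalDegree < p.totalDegree := by
  obtain ⟨m, hm, hmax⟩ := Finset.exists_mem_eq_sup _ (support_nonempty.2 h)
    fun s : σ →₀ ℕ => s.sum fun _ e => e
  have hp : m + Finsupp.single i 1 ∈ p.support := by
    rw [mem_support_iff, coeff_pderiv] at hm
    exact mem_support_iff.2 (left_ne_zero_of_mul hm)
  have := le_totalDegree hp
  rw [Finsupp.sum_add_index' (fun _ => rfl) (fun _ _ _ => rfl), Finsupp.sum_single_index rfl]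
    at this
  rw [totalDegree, hmax]
  omega

theorem pderiv_eq_zero_of_dvd [CommRing R] [IsDomain R] {p : MvPolynomial σ R} {i : σ}
    (h : p ∣ pderiv i p) : pderiv i p = 0 := by
  by_contra hne
  exact (totalDegree_le_of_dvd_of_isDomain h hne).not_gt (totalDegree_pderiv_lt hne)

theorem pderiv_ext [CommRing R] [IsAddTorsionFree R] {p q : MvPolynomial σ R}
    (hD : ∀ i, pderiv i p = pderiv i q) (h0 : coeff 0 p = coeff 0 q) : p = q := by
  apply coe_injective (σ := σ) (R := R)
  refine MvPowerSeries.pderiv.ext (fun i => ?_) ?_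
  · simp only [MvPowerSeries.pderiv_coe, hD i]
  · simpa only [← MvPowerSeries.coeff_zero_eq_constantCoeff_apply, coeff_coe] using h0

theorem eq_C_of_forall_pderiv_eq_zero [DecidableEq σ] [CommRing R] [IsAddTorsionFree R]
    {p : MvPolynomial σ R} (h : ∀ i, pderiv i p = 0) : p = C (coeff 0 p) :=
  pderiv_ext (fun i => by rw [h i, pderiv_C]) (by rw [coeff_C, if_pos rfl])

theorem exists_eq_C_mul_of_forall_mul_pderiv_eq {K : Type*} [Field K] [CharZero K]
    {G H : MvPolynomial σ K} (hG : G ≠ 0) (hH : H ≠ 0)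
    (hGH : ∀ i, H * pderiv i G = G * pderiv i H) : ∃ c : K, c ≠ 0 ∧ G = C c * H := by
  classical
  obtain ⟨g, h, u, hgh, rfl, rfl⟩ := UniqueFactorizationMonoid.exists_reduced_factors' G H hH
  have hu : u ≠ 0 := left_ne_zero_of_mul hG
  have hrel : ∀ i, h * pderiv i g = g * pderiv i h := fun i =>
    mul_left_cancel₀ (mul_ne_zero hu hu) <| by
      linear_combination (by simpa only [pderiv_mul] using hGH i : _ = _)
  obtain ⟨a, rfl⟩ : ∃ a, g = C a := ⟨_, eq_C_of_forall_pderiv_eq_zero fun i =>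
    pderiv_eq_zero_of_dvd <| hgh.dvd_of_dvd_mul_left ⟨pderiv i h, hrel i⟩⟩
  obtain ⟨b, rfl⟩ : ∃ b, h = C b := ⟨_, eq_C_of_forall_pderiv_eq_zero fun i =>
    pderiv_eq_zero_of_dvd <| hgh.symm.dvd_of_dvd_mul_left ⟨pderiv i (C a), (hrel i).symm⟩⟩
  have ha : a ≠ 0 := by rintro rfl; simp at hG
  have hb : b ≠ 0 := by rintro rfl; simp at hH
  exact ⟨a / b, div_ne_zero ha hb, by rw [mul_left_comm, ← C_mul, div_mul_cancel₀ _ hb]⟩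

-- Multiplying by `F` avoids the truncated exponent `d - 1` of `pderiv_pow`.
theorem mul_pderiv_pow [CommSemiring R] (F : MvPolynomial σ R) (i : σ) (d : ℕ) :
    F * pderiv i (F ^ d) = d * F ^ d * pderiv i F := by
  rw [pderiv_pow]
  cases d with
  | zero => simp
  | succ d => rw [Nat.add_sub_cancel, pow_succ]; ring

theorem forall_nsmul_mul_pderiv_eq_iff {K : Type*} [Field K] [CharZero K]
    {F₀ F₁ : MvPolynomial σ K} (hF₀ : F₀ ≠ 0) (hF₁ : F₁ ≠ 0) (d₀ d₁ : ℕ) :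
    (∀ i, d₀ • F₀ * pderiv i F₁ = pderiv i F₀ * d₁ • F₁) ↔
      ∃ c : K, c ≠ 0 ∧ F₀ ^ d₁ = C c * F₁ ^ d₀ := by
  simp only [nsmul_eq_mul]
  constructor
  · intro h
    refine exists_eq_C_mul_of_forall_mul_pderiv_eq (pow_ne_zero _ hF₀) (pow_ne_zero _ hF₁)
      fun i => mul_left_cancel₀ (mul_ne_zero hF₀ hF₁) ?_
    linear_combination F₁ ^ (d₀ + 1) * mul_pderiv_pow F₀ i d₁
      - F₀ ^ (d₁ + 1) * mul_pderiv_pow F₁ i d₀ - F₀ ^ d₁ * F₁ ^ d₀ * h i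
  · rintro ⟨c, -, hpow⟩ i
    have hd := congrArg (pderiv i) hpow
    rw [pderiv_C_mul] at hd
    refine mul_left_cancel₀ (pow_ne_zero d₁ hF₀) ?_
    linear_combination (d₀ : MvPolynomial σ K) * F₀ * pderiv i F₁ * hpow
      - C c * F₀ * mul_pderiv_pow F₁ i d₀ - F₀ * F₁ * hd + F₁ * mul_pderiv_pow F₀ i d₁

end MvPolynomial

theorem contractR_dwedge_apply_of_card_add_one_ne {n m : ℕ}
    (F : Fin m → MvPolynomial (Fin n) ℂ) {I : Finset (Fin n)} (hI : I.card + 1 ≠ m) :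
    contractR (dwedge F) I = 0 :=
  Finset.sum_eq_zero fun j hj => by
    rw [dwedge, dif_neg (by rwa [Finset.card_insert_of_notMem (Finset.mem_compl.1 hj)]),
      mul_zero]

section Pencil

variable {n : ℕ} (F₀ F₁ : MvPolynomial (Fin n) ℂ)

theorem dwedge_pair_of_lt {i j : Fin n} (hij : i < j) :
    dwedge ![F₀, F₁] {i, j} = pderiv i F₀ * pderiv j F₁ - pderiv j F₀ * pderiv i F₁ := by
  have hcard : ({i, j} : Finset (Fin n)).card = 2 := Finset.card_pair hij.ne
  have hiso : ∀ k, (({i, j} : Finset (Fin n)).orderIsoOfFin hcard k : Fin n) = ![i, j] k := by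
    intro k
    rw [Finset.coe_orderIsoOfFin_apply, ← Finset.orderEmbOfFin_unique (f := ![i, j]) hcard
      (by intro k; fin_cases k <;> simp) (Fin.strictMono_iff_lt_succ.2 fun k => by
        fin_cases k; simpa using hij)]
  simp [dwedge, hcard, Matrix.det_fin_two, hiso]

theorem neg_one_pow_mul_dwedge_pair_insert {i j : Fin n} (hij : j ≠ i) :
    (-1) ^ (({i} : Finset (Fin n)).filter (· < j)).card * dwedge ![F₀, F₁] (insert j {i}) =
      pderiv j F₀ * pderiv i F₁ - pderiv i F₀ * pderiv j F₁ := by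
  rcases hij.lt_or_gt with hlt | hlt
  · rw [Finset.filter_singleton, if_neg hlt.not_gt, dwedge_pair_of_lt F₀ F₁ hlt]
    simp
  · rw [Finset.filter_singleton, if_pos hlt, Finset.pair_comm, dwedge_pair_of_lt F₀ F₁ hlt]
    simp only [Finset.card_singleton, pow_one]
    ring

theorem contractR_dwedge_pair_singleton (i : Fin n) :
    contractR (dwedge ![F₀, F₁]) {i} =
      (∑ j, X j * pderiv j F₀) * pderiv i F₁ - pderiv i F₀ * ∑ j, X j * pderiv j F₁ := by
  calc contractR (dwedge ![F₀, F₁]) {i}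
      = ∑ j ∈ {i}ᶜ, X j * (pderiv j F₀ * pderiv i F₁ - pderiv i F₀ * pderiv j F₁) :=
        Finset.sum_congr rfl fun j hj => by
          rw [mul_right_comm, neg_one_pow_mul_dwedge_pair_insert F₀ F₁ (by simpa using hj),
            mul_comm]
    _ = ∑ j, X j * (pderiv j F₀ * pderiv i F₁ - pderiv i F₀ * pderiv j F₁) :=
        Finset.sum_subset (Finset.subset_univ _) fun j _ hj => by
          rw [Finset.notMem_compl, Finset.mem_singleton] at hj
          rw [hj, sub_self, mul_zero]
    _ = _ := by
        rw [Finset.sum_mul, Finset.mul_sum, ← Finset.sum_sub_distrib]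
        exact Finset.sum_congr rfl fun j _ => by ring

theorem contractR_dwedge_pair_eq_zero_iff :
    contractR (dwedge ![F₀, F₁]) = 0 ↔
      ∀ i, (∑ j, X j * pderiv j F₀) * pderiv i F₁ = pderiv i F₀ * ∑ j, X j * pderiv j F₁ := by
  simp_rw [← sub_eq_zero (a := _ * pderiv _ F₁), ← contractR_dwedge_pair_singleton]
  refine ⟨fun h i => congrFun h {i}, fun h => funext fun I => ?_⟩
  by_cases hI : I.card = 1
  · obtain ⟨i, rfl⟩ := Finset.card_eq_one.1 hI
    exact h i
  · exact contractR_dwedge_apply_of_card_add_one_ne _ (by omega)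

end Pencil

theorem base_locus_pencil_general (r d₀ d₁ : ℕ)
    (F₀ F₁ : MvPolynomial (Fin (r + 1)) ℂ)
    (h₀ : F₀.IsHomogeneous d₀) (h₁ : F₁.IsHomogeneous d₁)
    (hF₀ : F₀ ≠ 0) (hF₁ : F₁ ≠ 0) :
    contractR (dwedge ![F₀, F₁]) = 0 ↔ ∃ c : ℂ, c ≠ 0 ∧ F₀ ^ d₁ = C c * F₁ ^ d₀ := by
  rw [contractR_dwedge_pair_eq_zero_iff, h₀.sum_X_mul_pderiv, h₁.sum_X_mul_pderiv]
  exact forall_nsmul_mul_pderiv_eq_iff hF₀ hF₁ d₀ d₁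

/-- **Base locus for `q = 1`**: for nonzero homogeneous polynomials `F₀, F₁` of degrees
`d₀, d₁ > 0` on `ℂ^{r+1}`, one has `i_R(dF₀ ∧ dF₁) = 0` if and only if `F₀^{d₁}` is
proportional to `F₁^{d₀}` by a nonzero scalar. -/
theorem base_locus_pencil (r d₀ d₁ : ℕ) (hd₀ : 0 < d₀) (hd₁ : 0 < d₁)
    (F₀ F₁ : MvPolynomial (Fin (r + 1)) ℂ)
    (h₀ : F₀.IsHomogeneous d₀) (h₁ : F₁.IsHomogeneous d₁)
    (hF₀ : F₀ ≠ 0) (hF₁ : F₁ ≠ 0) :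
    contractR (dwedge ![F₀, F₁]) = 0 ↔ ∃ c : ℂ, c ≠ 0 ∧ F₀ ^ d₁ = C c * F₁ ^ d₀ :=
  base_locus_pencil_general r d₀ d₁ F₀ F₁ h₀ h₁ hF₀ hF₁
end

section
/- Let L be a nonzero linear form on ℂ^{r+1} and consider the point (L^2, L^3) in ℙ(S_2)×ℙ(S_3). The tangent space at (L^2, L^3) to the indeterminacy scheme B of the rational map (F,G) ↦ dF ∧ dG consists exactly of pairs (F', G') ∈ S_2/⟨L^2⟩ ⊕ S_3/⟨L^3⟩ with G' = (3/2)·L·F' (mod ⟨L^3⟩); i.e. pairs (F',G') of homogeneous polynomials of degrees 2 and 3 satisfying d(L^2) ∧ dG' + dF' ∧ d(L^3) = 0 are exactly those with 2G' − 3LF' ∈ ⟨L^3⟩ + ℂ·L^3 (G' = (3/2)LF' up to multiples of L^3, after modifying F' by multiples of L^2). -/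
/-!
Since `dL ∧ dL = 0`, the form `d(L²) ∧ dG' + dF' ∧ d(L³)` equals `L · dL ∧ dP` with
`P = 2G' - 3LF'`, so the condition is `dL ∧ dP = 0`. For a form `P` of degree `n` this forces
`P = c Lⁿ`: dividing gives `dP = k' dL`, Euler's identity turns this into `n P = L k` with
`k` of degree `n - 1`, differentiating shows `dL ∧ dk = 0` again, and induction on `n` concludes.
-/

open MvPolynomial

namespace MvPolynomial

variable {σ R K : Type*}

@[simp]
lemma pderiv_ofNat [CommSemiring R] (j : σ) (m : ℕ) [m.AtLeastTwo] :
    pderiv j (ofNat(m) : MvPolynomial σ R) = 0 :=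
  (pderiv j).map_natCast m

lemma IsHomogeneous.eq_C_coeff_zero [CommSemiring R] {P : MvPolynomial σ R}
    (hP : P.IsHomogeneous 0) : P = C (coeff 0 P) :=
  totalDegree_eq_zero_iff_eq_C.mp (Nat.le_zero.mp hP.totalDegree_le)

lemma IsHomogeneous.exists_pderiv_eq_C_ne_zero [CommSemiring R] [Fintype σ]
    {L : MvPolynomial σ R} (hL : L.IsHomogeneous 1) (hL0 : L ≠ 0) :
    ∃ i c, c ≠ 0 ∧ pderiv i L = C c := by
  obtain ⟨i, hi⟩ : ∃ i, pderiv i L ≠ 0 := by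
    by_contra! h
    have hEuler := hL.sum_X_mul_pderiv
    simp only [h, mul_zero, Finset.sum_const_zero, one_smul] at hEuler
    exact hL0 hEuler.symm
  have hLi : pderiv i L = C (coeff 0 (pderiv i L)) := hL.pderiv.eq_C_coeff_zero
  exact ⟨i, _, fun h => hi (by rw [hLi, h, C_0]), hLi⟩

/-- Coordinate form of `dL ∧ dP = 0`. -/
def GradParallel [CommSemiring R] (L P : MvPolynomial σ R) : Prop :=
  ∀ a b, pderiv a L * pderiv b P = pderiv b L * pderiv a P

lemma gradParallel_C_mul_pow [CommSemiring R] (L : MvPolynomial σ R) (c : R) (n : ℕ) :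
    GradParallel L (C c * L ^ n) := fun a b => by
  simp only [Derivation.leibniz, Derivation.leibniz_pow, pderiv_C, smul_eq_mul]
  ring

lemma GradParallel.of_nsmul_eq_mul [CommRing R] [IsDomain R] {L P k : MvPolynomial σ R}
    {n : ℕ} (hP : GradParallel L P) (hL0 : L ≠ 0) (h : n • P = L * k) :
    GradParallel L k := fun a b => by
  have hd : ∀ j, n * pderiv j P = pderiv j L * k + L * pderiv j k := fun j => by
    rw [← nsmul_eq_mul, ← Derivation.map_smul_of_tower, h, Derivation.leibniz, smul_eq_mul,
      smul_eq_mul, mul_comm k, add_comm]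
  refine sub_eq_zero.mp ((mul_eq_zero.mp ?_).resolve_left hL0)
  linear_combination pderiv b L * hd a - pderiv a L * hd b + (n : MvPolynomial σ R) * hP a b

section Field

variable [Field K] [Fintype σ] {L P : MvPolynomial σ K}

/-- De Rham division: `dP = k' dL`, and Euler's identity turns `k'` into `k`. -/
lemma GradParallel.exists_nsmul_eq_mul {n : ℕ} (hP : GradParallel L P)
    (hL : L.IsHomogeneous 1) (hL0 : L ≠ 0) (hPn : P.IsHomogeneous n) :
    ∃ k : MvPolynomial σ K, k.IsHomogeneous (n - 1) ∧ n • P = L * k := by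
  obtain ⟨i, c, hc, hLi⟩ := hL.exists_pderiv_eq_C_ne_zero hL0
  refine ⟨C c⁻¹ * pderiv i P, hPn.pderiv.C_mul _, ?_⟩
  have hcc : C c⁻¹ * C c = (1 : MvPolynomial σ K) := by rw [← C_mul, inv_mul_cancel₀ hc, C_1]
  have hdiv : ∀ j, pderiv j P = pderiv j L * (C c⁻¹ * pderiv i P) := fun j => by
    have hij := hP i j
    rw [hLi] at hij
    linear_combination C c⁻¹ * hij - pderiv j P * hcc
  rw [← hPn.sum_X_mul_pderiv, Finset.sum_congr rfl fun j _ => by rw [hdiv j, ← mul_assoc],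
    ← Finset.sum_mul, hL.sum_X_mul_pderiv, one_smul]

theorem GradParallel.exists_eq_C_mul_pow [CharZero K] {n : ℕ} (hP : GradParallel L P)
    (hL : L.IsHomogeneous 1) (hL0 : L ≠ 0) (hPn : P.IsHomogeneous n) :
    ∃ c : K, P = C c * L ^ n := by
  induction n generalizing P with
  | zero => exact ⟨coeff 0 P, by rw [pow_zero, mul_one]; exact hPn.eq_C_coeff_zero⟩
  | succ n ih =>
    obtain ⟨k, hk, hPk⟩ := hP.exists_nsmul_eq_mul hL hL0 hPn
    obtain ⟨c, rfl⟩ := ih (hP.of_nsmul_eq_mul hL0 hPk) hk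
    have hn : (n + 1 : K) ≠ 0 := n.cast_add_one_ne_zero
    rw [← Nat.cast_smul_eq_nsmul K, Nat.cast_succ, smul_eq_C_mul] at hPk
    refine ⟨c / (n + 1), mul_left_cancel₀ (C_ne_zero.mpr hn) ?_⟩
    rw [hPk, ← mul_assoc (C _), ← C_mul, mul_div_cancel₀ _ hn]
    ring

theorem gradParallel_iff_exists_eq_C_mul_pow [CharZero K] {n : ℕ}
    (hL : L.IsHomogeneous 1) (hL0 : L ≠ 0) (hPn : P.IsHomogeneous n) :
    GradParallel L P ↔ ∃ c : K, P = C c * L ^ n := by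
  refine ⟨fun hP => hP.exists_eq_C_mul_pow hL hL0 hPn, ?_⟩
  rintro ⟨c, rfl⟩
  exact gradParallel_C_mul_pow L c n

end Field

end MvPolynomial

section Dwedge

variable {n : ℕ} (A B : MvPolynomial (Fin n) ℂ)

lemma dwedge_pair_apply {K : Finset (Fin n)} (hK : K.card = 2) :
    dwedge ![A, B] K =
      pderiv (K.orderIsoOfFin hK 0 : Fin n) A * pderiv (K.orderIsoOfFin hK 1 : Fin n) B
      - pderiv (K.orderIsoOfFin hK 1 : Fin n) A * pderiv (K.orderIsoOfFin hK 0 : Fin n) B := by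
  rw [dwedge, dif_pos hK, Matrix.det_fin_two]
  simp [mul_comm]

lemma dwedge_pair_apply_pair {a b : Fin n} (hab : a < b) :
    dwedge ![A, B] {a, b} = pderiv a A * pderiv b B - pderiv b A * pderiv a B := by
  have hK := Finset.card_pair hab.ne
  have h0 : (({a, b} : Finset (Fin n)).orderIsoOfFin hK 0 : Fin n) = a := by
    rw [Finset.coe_orderIsoOfFin_apply]
    exact (Finset.orderEmbOfFin_zero hK two_pos).trans (by simp [hab.le])
  have h1 : (({a, b} : Finset (Fin n)).orderIsoOfFin hK 1 : Fin n) = b := by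
    rw [Finset.coe_orderIsoOfFin_apply]
    exact (Finset.orderEmbOfFin_last hK two_pos).trans (by simp [hab.le])
  rw [dwedge_pair_apply A B hK, h0, h1]

lemma dwedge_pair_eq_zero_iff : dwedge ![A, B] = 0 ↔ GradParallel A B := by
  refine ⟨fun h a b => ?_, fun h => funext fun K => ?_⟩
  · rcases lt_trichotomy a b with hab | rfl | hba
    · have hab' := congrFun h {a, b}
      rwa [dwedge_pair_apply_pair A B hab, Pi.zero_apply, sub_eq_zero] at hab'
    · rfl
    · have hba' := congrFun h {b, a}
      rw [dwedge_pair_apply_pair A B hba, Pi.zero_apply, sub_eq_zero] at hba'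
      exact hba'.symm
  · by_cases hK : K.card = 2
    · rw [dwedge_pair_apply A B hK, h, sub_self, Pi.zero_apply]
    · rw [dwedge, dif_neg hK, Pi.zero_apply]

/-- `d(L²) ∧ dG + dF ∧ d(L³) = L dL ∧ (2dG - 3L dF) = L dL ∧ d(2G - 3LF)`, since `dL ∧ dL = 0`. -/
lemma dwedge_sq_add_dwedge_cube (L F G : MvPolynomial (Fin n) ℂ) :
    dwedge ![L ^ 2, G] + dwedge ![F, L ^ 3] = L • dwedge ![L, 2 * G - 3 * (L * F)] := by
  funext K
  by_cases hK : K.card = 2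
  · simp only [Pi.add_apply, Pi.smul_apply, smul_eq_mul, dwedge_pair_apply _ _ hK, map_sub,
      Derivation.leibniz, Derivation.leibniz_pow, pderiv_ofNat, nsmul_eq_mul]
    ring
  · simp only [Pi.add_apply, Pi.smul_apply, dwedge, dif_neg hK, add_zero, smul_zero]

end Dwedge

/-- **Tangent space to the indeterminacy scheme at `(L², L³)`.** For a nonzero linear
form `L` on `ℂ^{r+1}`, homogeneous `F'` of degree 2 and `G'` of degree 3, the pair
`(F',G')` satisfies the first-order condition `d(L²) ∧ dG' + dF' ∧ d(L³) = 0` if and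
only if `2G' − 3LF'` is a scalar multiple of `L³`, i.e. `G' = (3/2)·L·F'` modulo `⟨L³⟩`
(after the allowed modification of `F'` by multiples of `L²`). -/
theorem tangent_space_indeterminacy (r : ℕ)
    (L F' G' : MvPolynomial (Fin (r + 1)) ℂ)
    (hL : L.IsHomogeneous 1) (hL0 : L ≠ 0)
    (hF : F'.IsHomogeneous 2) (hG : G'.IsHomogeneous 3) :
    dwedge ![L ^ 2, G'] + dwedge ![F', L ^ 3] = 0 ↔
      ∃ c : ℂ, (2 : MvPolynomial (Fin (r + 1)) ℂ) * G'
        = 3 * (L * F') + C c * L ^ 3 := by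
  have hP : (2 * G' - 3 * (L * F')).IsHomogeneous 3 := by
    rw [← map_ofNat C 2, ← map_ofNat C 3]
    exact (hG.C_mul 2).sub ((hL.mul hF).C_mul 3)
  rw [dwedge_sq_add_dwedge_cube, smul_eq_zero, or_iff_right hL0, dwedge_pair_eq_zero_iff,
    gradParallel_iff_exists_eq_C_mul_pow hL hL0 hP]
  simp only [sub_eq_iff_eq_add']
end
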